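/- For every irrational α, m(α) ≤ 1/2 and m(α) ≥ 1/4, where m(α) = limsup_{t→∞} t·μ_α(t) and μ_α is the Minkowski diagonal function of α. Hence min 𝕄 ≥ 1/4 and max 𝕄 ≤ 1/2 for the spectrum 𝕄 = {m(α) : α irrational}. -/

import Mathlib

/-!
Between consecutive Legendre denominators `q < Q'` the function `μ_α` is affine, so `t μ_α(t)` is a
concave quadratic in `t`. With `x = ‖qα‖` and `X = ‖Q'α‖`, its maximum is at most `1/2` as soon as
`(qX + Q'x - 1)² ≤ (1 - 2qx)(1 - 2Q'X)`, and its value `(q + Q')(x + X)/4` at the midpoint is at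
least `1/4` as soon as `qX + Q'x ≥ 1`. By Vahlen's theorem two consecutive Legendre denominators are
either `q_ν, q_{ν+1}`, where `q_{ν+1}ξ_ν + q_νξ_{ν+1} = 1` and the Legendre conditions give both
inequalities, or `q_ν, q_{ν+2}` with `q_{ν+1}ξ_{ν+1} ≥ 1/2`, and then `q_{ν+2} = a q_{ν+1} + q_ν`,
`ξ_{ν+2} = ξ_ν - a ξ_{ν+1}` turn the first inequality into `q_{ν+1}ξ_{ν+1} ≥ 1/2` and make the
second follow from `a ≥ 1`.
-/

open Real Filter Set

/-- The function F from the paper. -/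
noncomputable def Fm (x y : ℝ) : ℝ := (1 - x*y)^2 / (4*(1+x*y)*(1-x)*(1-y))

/-- The function G from the paper. -/
noncomputable def Gm (x y : ℝ) : ℝ := (x + y + 1)/4

/-- Complete quotients of α : cq α 0 = α, cq α (n+1) = 1/{cq α n}. -/
noncomputable def cq (α : ℝ) : ℕ → ℝ
  | 0 => α
  | n+1 => (Int.fract (cq α n))⁻¹

/-- Partial quotients a_n of the continued fraction of α. -/
noncomputable def pquot (α : ℝ) (n : ℕ) : ℤ := ⌊cq α n⌋

/-- Denominators q_n of the convergents of α. -/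
noncomputable def qd (α : ℝ) : ℕ → ℝ
  | 0 => 1
  | 1 => (pquot α 1 : ℝ)
  | n+2 => (pquot α (n+2) : ℝ) * qd α (n+1) + qd α n

/-- Numerators p_n of the convergents of α. -/
noncomputable def pnum (α : ℝ) : ℕ → ℝ
  | 0 => (pquot α 0 : ℝ)
  | 1 => (pquot α 1 : ℝ) * (pquot α 0 : ℝ) + 1
  | n+2 => (pquot α (n+2) : ℝ) * pnum α (n+1) + pnum α n

/-- ξ_n = |q_n α - p_n|. -/
noncomputable def xi (α : ℝ) (n : ℕ) : ℝ := |qd α n * α - pnum α n|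

/-- α*_n = [0; a_n, ..., a_1] = q_{n-1}/q_n. -/
noncomputable def astar (α : ℝ) (n : ℕ) : ℝ := qd α (n-1) / qd α n

/-- Distance from x to the nearest integer. -/
noncomputable def nidist (x : ℝ) : ℝ := |x - round x|

/-- The ν-th convergent denominator satisfies the Legendre condition. -/
noncomputable def LegendreDen (α : ℝ) (ν : ℕ) : Prop :=
  |α - pnum α ν / qd α ν| < 1/(2 * (qd α ν)^2)

/-- ψ_α(t) = min_{1 ≤ x ≤ t} ‖xα‖. -/
noncomputable def psif (α : ℝ) (t : ℝ) : ℝ :=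
  sInf {d : ℝ | ∃ x : ℤ, 1 ≤ x ∧ (x:ℝ) ≤ t ∧ d = nidist (x*α)}

section ContinuedFraction

variable {α : ℝ}

lemma irrational_cq (hα : Irrational α) : ∀ n, Irrational (cq α n)
  | 0 => hα
  | n + 1 => ((irrational_cq hα n).sub_intCast _).inv

lemma one_lt_cq_succ (hα : Irrational α) (n : ℕ) : 1 < cq α (n + 1) :=
  one_lt_inv_iff₀.2 ⟨Int.fract_pos.2 ((irrational_cq hα n).ne_int _), Int.fract_lt_one _⟩

lemma cq_pos_succ (hα : Irrational α) (n : ℕ) : 0 < cq α (n + 1) :=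
  one_pos.trans (one_lt_cq_succ hα n)

lemma cq_eq_pquot_add_inv (n : ℕ) : cq α n = pquot α n + (cq α (n + 1))⁻¹ := by
  rw [cq, inv_inv, pquot, Int.floor_add_fract]

lemma one_le_pquot_succ (hα : Irrational α) (n : ℕ) : (1 : ℝ) ≤ pquot α (n + 1) := by
  exact_mod_cast Int.le_floor.2 (by exact_mod_cast (one_lt_cq_succ hα n).le)

lemma qd_add_two (n : ℕ) : qd α (n + 2) = pquot α (n + 2) * qd α (n + 1) + qd α n := rfl

lemma one_le_qd (hα : Irrational α) : ∀ n, 1 ≤ qd α n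
  | 0 => le_rfl
  | 1 => one_le_pquot_succ hα 0
  | n + 2 => by
    rw [qd_add_two]
    nlinarith [one_le_pquot_succ hα (n + 1), one_le_qd hα n, one_le_qd hα (n + 1)]

lemma natCast_le_qd (hα : Irrational α) : ∀ n : ℕ, (n : ℝ) ≤ qd α n
  | 0 => by simp [qd]
  | 1 => by simpa using one_le_qd hα 1
  | n + 2 => by
    have ha : (1 : ℝ) ≤ pquot α (n + 2) := one_le_pquot_succ hα (n + 1)
    have ih : (n : ℝ) + 1 ≤ qd α (n + 1) := by exact_mod_cast natCast_le_qd hα (n + 1)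
    rw [qd_add_two]
    push_cast
    nlinarith [one_le_qd hα n]

lemma qd_pos (hα : Irrational α) (n : ℕ) : 0 < qd α n := one_pos.trans_le (one_le_qd hα n)

lemma monotone_qd (hα : Irrational α) : Monotone (qd α) := by
  refine monotone_nat_of_le_succ fun n => ?_
  cases n with
  | zero => simpa [qd] using one_le_pquot_succ hα 0
  | succ n =>
    rw [qd_add_two]
    nlinarith [one_le_pquot_succ hα (n + 1), one_le_qd hα n, one_le_qd hα (n + 1)]

lemma tendsto_qd_atTop (hα : Irrational α) : Tendsto (qd α) atTop atTop :=
  tendsto_atTop_mono (natCast_le_qd hα) tendsto_natCast_atTop_atTop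

noncomputable def convErr (α : ℝ) (n : ℕ) : ℝ := qd α n * α - pnum α n

lemma convErr_zero : convErr α 0 = (cq α 1)⁻¹ := by
  have h := cq_eq_pquot_add_inv (α := α) 0
  simp only [cq] at h
  simp only [convErr, qd, pnum, cq]
  linarith

lemma convErr_one : convErr α 1 = pquot α 1 * convErr α 0 - 1 := by
  simp only [convErr, qd, pnum]
  ring

lemma convErr_add_two (n : ℕ) :
    convErr α (n + 2) = pquot α (n + 2) * convErr α (n + 1) + convErr α n := by
  simp only [convErr, qd, pnum]
  ring

lemma convErr_succ (hα : Irrational α) :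
    ∀ n, convErr α (n + 1) = -convErr α n / cq α (n + 2)
  | 0 => by
    have hc₁ : cq α 1 ≠ 0 := (cq_pos_succ hα 0).ne'
    have hc₂ : cq α 2 ≠ 0 := (cq_pos_succ hα 1).ne'
    have h : cq α 1 * cq α 2 = pquot α 1 * cq α 2 + 1 := by
      rw [cq_eq_pquot_add_inv (α := α) 1]; field_simp
    rw [convErr_one, convErr_zero, eq_div_iff hc₂]
    field_simp
    linear_combination -h
  | n + 1 => by
    have hc₂ : cq α (n + 2) ≠ 0 := (cq_pos_succ hα (n + 1)).ne'
    have hc₃ : cq α (n + 3) ≠ 0 := (cq_pos_succ hα (n + 2)).ne'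
    have ih : convErr α n = -convErr α (n + 1) * cq α (n + 2) := by
      rw [convErr_succ hα n]; field_simp
    have h : cq α (n + 2) = pquot α (n + 2) + (cq α (n + 3))⁻¹ := cq_eq_pquot_add_inv (n + 2)
    rw [convErr_add_two, eq_div_iff hc₃, ih, h]
    field_simp
    ring

lemma neg_one_pow_mul_convErr_pos (hα : Irrational α) : ∀ n, 0 < (-1) ^ n * convErr α n
  | 0 => by simpa [convErr_zero] using cq_pos_succ hα 0
  | n + 1 => by
    have h : (-1) ^ (n + 1) * convErr α (n + 1) = (-1) ^ n * convErr α n / cq α (n + 2) := by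
      rw [convErr_succ hα]; ring
    rw [h]
    exact div_pos (neg_one_pow_mul_convErr_pos hα n) (cq_pos_succ hα (n + 1))

lemma xi_eq_neg_one_pow_mul_convErr (hα : Irrational α) (n : ℕ) :
    xi α n = (-1) ^ n * convErr α n := by
  rw [← abs_of_pos (neg_one_pow_mul_convErr_pos hα n), abs_mul, abs_neg_one_pow, one_mul]
  rfl

lemma xi_pos (hα : Irrational α) (n : ℕ) : 0 < xi α n := by
  rw [xi_eq_neg_one_pow_mul_convErr hα]; exact neg_one_pow_mul_convErr_pos hα n

lemma xi_succ_lt (hα : Irrational α) (n : ℕ) : xi α (n + 1) < xi α n := by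
  have h : xi α (n + 1) = xi α n / cq α (n + 2) := by
    rw [xi_eq_neg_one_pow_mul_convErr hα, xi_eq_neg_one_pow_mul_convErr hα, convErr_succ hα]
    ring
  rw [h]
  exact div_lt_self (xi_pos hα n) (one_lt_cq_succ hα (n + 1))

lemma xi_add_two (hα : Irrational α) (n : ℕ) :
    xi α (n + 2) = xi α n - pquot α (n + 2) * xi α (n + 1) := by
  simp only [xi_eq_neg_one_pow_mul_convErr hα, convErr_add_two, pow_succ]
  ring

lemma pnum_succ_mul_qd_sub_pnum_mul_qd_succ :
    ∀ n, pnum α (n + 1) * qd α n - pnum α n * qd α (n + 1) = (-1) ^ n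
  | 0 => by simp only [pnum, qd]; ring
  | n + 1 => by
    have ih := pnum_succ_mul_qd_sub_pnum_mul_qd_succ n
    simp only [pnum, qd] at ih ⊢
    linear_combination -ih

lemma qd_succ_mul_xi_add_qd_mul_xi_succ (hα : Irrational α) (n : ℕ) :
    qd α (n + 1) * xi α n + qd α n * xi α (n + 1) = 1 := by
  have hdet := pnum_succ_mul_qd_sub_pnum_mul_qd_succ (α := α) n
  have hsq : (-1 : ℝ) ^ n * (-1) ^ n = 1 := by rw [← mul_pow]; norm_num
  simp only [xi_eq_neg_one_pow_mul_convErr hα, convErr, pow_succ]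
  linear_combination (-1) ^ n * hdet + hsq

lemma exists_intCast_eq_pnum : ∀ n, ∃ z : ℤ, pnum α n = z
  | 0 => ⟨pquot α 0, rfl⟩
  | 1 => ⟨pquot α 1 * pquot α 0 + 1, by simp [pnum]⟩
  | n + 2 => by
    obtain ⟨z₁, h₁⟩ := exists_intCast_eq_pnum (n + 1)
    obtain ⟨z₀, h₀⟩ := exists_intCast_eq_pnum n
    exact ⟨pquot α (n + 2) * z₁ + z₀, by simp [pnum, h₁, h₀]⟩

lemma nidist_eq_abs_sub_intCast {x : ℝ} {z : ℤ} (h : |x - z| < 1 / 2) : nidist x = |x - z| := by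
  have hround : round x = z := by
    rw [round_eq_iff]
    constructor <;> linarith [abs_lt.1 h]
  rw [nidist, hround]

lemma legendreDen_iff (hα : Irrational α) (n : ℕ) :
    LegendreDen α n ↔ qd α n * xi α n < 1 / 2 := by
  have hq := qd_pos hα n
  have h : α - pnum α n / qd α n = (qd α n * α - pnum α n) / qd α n := by field_simp
  rw [LegendreDen, h, abs_div, abs_of_pos hq, div_lt_div_iff₀ hq (by positivity)]
  change xi α n * _ < _ ↔ _
  constructor <;> intro <;> nlinarith

lemma xi_lt_half_of_legendreDen (hα : Irrational α) {n : ℕ} (h : LegendreDen α n) :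
    xi α n < 1 / 2 := by
  nlinarith [(legendreDen_iff hα n).1 h, one_le_qd hα n, xi_pos hα n]

lemma nidist_qd_mul_of_legendreDen (hα : Irrational α) {n : ℕ} (h : LegendreDen α n) :
    nidist (qd α n * α) = xi α n := by
  obtain ⟨z, hz⟩ := exists_intCast_eq_pnum (α := α) n
  have hxi := xi_lt_half_of_legendreDen hα h
  rw [xi, hz] at hxi ⊢
  exact nidist_eq_abs_sub_intCast hxi

lemma qd_lt_qd_succ_of_legendreDen (hα : Irrational α) {n : ℕ} (h : LegendreDen α n) :
    qd α n < qd α (n + 1) := by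
  by_contra! hle
  have hfund := qd_succ_mul_xi_add_qd_mul_xi_succ hα n
  nlinarith [(legendreDen_iff hα n).1 h, xi_pos hα n, xi_pos hα (n + 1), xi_succ_lt hα n,
    qd_pos hα n]

/-- Vahlen's theorem. -/
lemma legendreDen_or_legendreDen_succ (hα : Irrational α) (n : ℕ) :
    LegendreDen α n ∨ LegendreDen α (n + 1) := by
  simp only [legendreDen_iff hα, ← not_le, ← not_and_or]
  rintro ⟨h₀, h₁⟩
  have hfund := qd_succ_mul_xi_add_qd_mul_xi_succ hα n
  have hlt := sub_pos.2 (xi_succ_lt hα n)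
  rcases (monotone_qd hα (Nat.le_succ n)).lt_or_eq with hq | hq
  · nlinarith [mul_pos (sub_pos.2 hq) hlt]
  · rw [← hq] at h₁ hfund
    nlinarith [mul_pos (qd_pos hα n) hlt]

end ContinuedFraction

noncomputable def linInterp (q Q' x X t : ℝ) : ℝ :=
  ((Q' - t) / (Q' - q)) * x + ((t - q) / (Q' - q)) * X

/-- The conditions on two consecutive vertices `(q, x)`, `(Q', X)` of the graph of `μ_α` which
give `t μ_α(t) ≤ 1/2` between them and `1/4 ≤ t μ_α(t)` at their midpoint. -/
structure LegendreChord (q Q' x X : ℝ) : Prop where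
  pos_left : 0 < q
  lt : q < Q'
  pos_right : 0 < X
  lt_left : X < x
  sq_le : (q * X + Q' * x - 1) ^ 2 ≤ (1 - 2 * (q * x)) * (1 - 2 * (Q' * X))
  one_le : 1 ≤ q * X + Q' * x

namespace LegendreChord

variable {q Q' x X : ℝ}

lemma mul_linInterp_le_half (h : LegendreChord q Q' x X) (t : ℝ) :
    t * linInterp q Q' x X t ≤ 1 / 2 := by
  have hqQ := sub_pos.2 h.lt
  have hxX := sub_pos.2 h.lt_left
  have hval : t * linInterp q Q' x X t = t * ((Q' - t) * x + (t - q) * X) / (Q' - q) := by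
    unfold linInterp; field_simp
  -- the concave quadratic `t ((Q' - t) x + (t - q) X)` peaks at `t = (Q' x - q X) / (2 (x - X))`
  have hquad : 2 * (x - X) * ((Q' - q) - 2 * t * ((Q' - t) * x + (t - q) * X))
      = (2 * (x - X) * t - (Q' * x - q * X)) ^ 2
        + ((1 - 2 * (q * x)) * (1 - 2 * (Q' * X)) - (q * X + Q' * x - 1) ^ 2) := by ring
  have hnonneg : 0 ≤ (Q' - q) - 2 * t * ((Q' - t) * x + (t - q) * X) := by
    refine nonneg_of_mul_nonneg_right ?_ (by positivity : (0 : ℝ) < 2 * (x - X))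
    rw [hquad]
    nlinarith [sq_nonneg (2 * (x - X) * t - (Q' * x - q * X)), h.sq_le]
  rw [hval, div_le_iff₀ hqQ]
  linarith

lemma quarter_le_mid_mul_linInterp (h : LegendreChord q Q' x X) :
    1 / 4 ≤ (q + Q') / 2 * linInterp q Q' x X ((q + Q') / 2) := by
  have hqQ := (sub_pos.2 h.lt).ne'
  have hval : (q + Q') / 2 * linInterp q Q' x X ((q + Q') / 2) = (q + Q') * (x + X) / 4 := by
    unfold linInterp; field_simp; ring
  rw [hval]
  nlinarith [h.one_le, mul_pos h.pos_left (h.pos_right.trans h.lt_left),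
    mul_pos (h.pos_left.trans h.lt) h.pos_right]

end LegendreChord

lemma legendreChord_of_add_eq_one {q Q' x X : ℝ} (hq : 0 < q) (hqQ : q < Q') (hX : 0 < X)
    (hXx : X < x) (hsum : Q' * x + q * X = 1) (hx : q * x < 1 / 2) (hX' : Q' * X < 1 / 2) :
    LegendreChord q Q' x X where
  pos_left := hq
  lt := hqQ
  pos_right := hX
  lt_left := hXx
  sq_le := by
    rw [show q * X + Q' * x - 1 = 0 by linarith]
    nlinarith
  one_le := by linarith

lemma legendreChord_of_skip {q q₁ x x₁ a : ℝ} (ha : 1 ≤ a) (hq : 0 < q) (hqq₁ : q < q₁)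
    (hx₁x : x₁ < x) (hsum : q₁ * x + q * x₁ = 1) (hx₁ : 1 / 2 ≤ q₁ * x₁) (hx : q * x < 1 / 2)
    (hX : 0 < x - a * x₁) :
    LegendreChord q (a * q₁ + q) x (x - a * x₁) where
  pos_left := hq
  lt := by nlinarith
  pos_right := hX
  lt_left := by nlinarith [hx₁.trans_lt' (by norm_num : (0 : ℝ) < 1 / 2)]
  sq_le := by
    have hid : (1 - 2 * (q * x)) * (1 - 2 * ((a * q₁ + q) * (x - a * x₁)))
        - (q * (x - a * x₁) + (a * q₁ + q) * x - 1) ^ 2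
        = a ^ 2 * (2 * (q₁ * x₁) - (q₁ * x + q * x₁) ^ 2) := by ring
    rw [hsum] at hid
    nlinarith [sq_nonneg a]
  one_le := by
    have hcross : q * (x - a * x₁) + (a * q₁ + q) * x = a * (1 - 2 * (q * x₁)) + 2 * (q * x) := by
      linear_combination a * hsum
    have hqx₁ : q * x₁ < q * x := by nlinarith
    nlinarith

section LegendreDenominators

variable {α : ℝ}

lemma legendreChord_qd_succ (hα : Irrational α) {n : ℕ} (h₀ : LegendreDen α n)
    (h₁ : LegendreDen α (n + 1)) :
    LegendreChord (qd α n) (qd α (n + 1)) (xi α n) (xi α (n + 1)) :=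
  legendreChord_of_add_eq_one (qd_pos hα n) (qd_lt_qd_succ_of_legendreDen hα h₀) (xi_pos hα _)
    (xi_succ_lt hα n) (qd_succ_mul_xi_add_qd_mul_xi_succ hα n) ((legendreDen_iff hα n).1 h₀)
    ((legendreDen_iff hα (n + 1)).1 h₁)

lemma legendreChord_qd_add_two (hα : Irrational α) {n : ℕ} (h₀ : LegendreDen α n)
    (h₁ : ¬LegendreDen α (n + 1)) :
    LegendreChord (qd α n) (qd α (n + 2)) (xi α n) (xi α (n + 2)) := by
  have hX := xi_pos hα (n + 2)
  rw [xi_add_two hα] at hX ⊢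
  rw [qd_add_two]
  exact legendreChord_of_skip (one_le_pquot_succ hα (n + 1)) (qd_pos hα n)
    (qd_lt_qd_succ_of_legendreDen hα h₀) (xi_succ_lt hα n)
    (qd_succ_mul_xi_add_qd_mul_xi_succ hα n) (not_lt.1 (mt (legendreDen_iff hα _).2 h₁))
    ((legendreDen_iff hα n).1 h₀) hX

lemma exists_legendreDen_qd_eq_and_succ (hα : Irrational α) {Q : ℕ → ℝ} (hQmono : StrictMono Q)
    (hQmem : ∀ n, ∃ ν, Q n = qd α ν ∧ LegendreDen α ν)
    (hQall : ∀ ν, LegendreDen α ν → ∃ n, Q n = qd α ν) (n : ℕ) :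
    ∃ ν, LegendreDen α ν ∧ Q n = qd α ν ∧
      (LegendreDen α (ν + 1) ∧ Q (n + 1) = qd α (ν + 1) ∨
        ¬LegendreDen α (ν + 1) ∧ Q (n + 1) = qd α (ν + 2)) := by
  obtain ⟨ν, hQν, hν⟩ := hQmem n
  obtain ⟨ν', hQν', hν'⟩ := hQmem (n + 1)
  have hνν' : ν < ν' := (monotone_qd hα).reflect_lt (hQν ▸ hQν' ▸ hQmono n.lt_succ_self)
  have hnext : ∀ m, LegendreDen α m → qd α ν < qd α m → Q (n + 1) ≤ qd α m := by
    intro m hm hlt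
    obtain ⟨k, hk⟩ := hQall m hm
    rw [← hQν, ← hk] at hlt
    exact hk ▸ hQmono.monotone (hQmono.lt_iff_lt.1 hlt)
  have hqν := qd_lt_qd_succ_of_legendreDen hα hν
  refine ⟨ν, hν, hQν, ?_⟩
  by_cases h₁ : LegendreDen α (ν + 1)
  · refine Or.inl ⟨h₁, (hnext _ h₁ hqν).antisymm ?_⟩
    exact hQν' ▸ monotone_qd hα hνν'
  · have h₂ := (legendreDen_or_legendreDen_succ hα (ν + 1)).resolve_left h₁
    refine Or.inr ⟨h₁, (hnext _ h₂ (hqν.trans_le (monotone_qd hα ν.succ.le_succ))).antisymm ?_⟩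
    have hν'ne : ν' ≠ ν + 1 := by rintro rfl; exact h₁ hν'
    exact hQν' ▸ monotone_qd hα (by omega)

lemma legendreChord_of_legendreDen_enum (hα : Irrational α) {Q : ℕ → ℝ} (hQmono : StrictMono Q)
    (hQmem : ∀ n, ∃ ν, Q n = qd α ν ∧ LegendreDen α ν)
    (hQall : ∀ ν, LegendreDen α ν → ∃ n, Q n = qd α ν) (n : ℕ) :
    LegendreChord (Q n) (Q (n + 1)) (nidist (Q n * α)) (nidist (Q (n + 1) * α)) := by
  obtain ⟨ν, hν, hQν, ⟨h₁, hQν'⟩ | ⟨h₁, hQν'⟩⟩ :=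
    exists_legendreDen_qd_eq_and_succ hα hQmono hQmem hQall n
  · rw [hQν, hQν', nidist_qd_mul_of_legendreDen hα hν, nidist_qd_mul_of_legendreDen hα h₁]
    exact legendreChord_qd_succ hα hν h₁
  · have h₂ := (legendreDen_or_legendreDen_succ hα (ν + 1)).resolve_left h₁
    rw [hQν, hQν', nidist_qd_mul_of_legendreDen hα hν, nidist_qd_mul_of_legendreDen hα h₂]
    exact legendreChord_qd_add_two hα hν h₁

lemma tendsto_atTop_of_legendreDen_enum (hα : Irrational α) {Q : ℕ → ℝ} (hQmono : StrictMono Q)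
    (hQall : ∀ ν, LegendreDen α ν → ∃ n, Q n = qd α ν) : Tendsto Q atTop atTop := by
  refine tendsto_atTop_atTop_of_monotone hQmono.monotone fun b => ?_
  obtain ⟨ν, hν⟩ := ((tendsto_qd_atTop hα).eventually_ge_atTop b).exists
  rcases legendreDen_or_legendreDen_succ hα ν with h | h
  · obtain ⟨n, hn⟩ := hQall ν h
    exact ⟨n, hn ▸ hν⟩
  · obtain ⟨n, hn⟩ := hQall _ h
    exact ⟨n, hn ▸ hν.trans (monotone_qd hα ν.le_succ)⟩

end LegendreDenominators

lemma exists_mem_Icc_of_tendsto_atTop {β : Type*} [LinearOrder β] [NoMaxOrder β] {f : ℕ → β}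
    (hf : Monotone f) (htop : Tendsto f atTop atTop) {t : β} (ht : f 0 ≤ t) :
    ∃ n, t ∈ Icc (f n) (f (n + 1)) := by
  have hcover := iUnion_Ico_map_succ_eq_Ici (fun n => hf (Nat.zero_le n))
    (not_bddAbove_of_tendsto_atTop htop)
  obtain ⟨n, hn⟩ := mem_iUnion.1 (hcover.symm ▸ ht : t ∈ ⋃ n, Ico (f n) (f (Order.succ n)))
  exact ⟨n, Ico_subset_Icc_self hn⟩

theorem stmt16 (α : ℝ) (hα : Irrational α)
    (Q : ℕ → ℝ) (hQmono : StrictMono Q)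
    (hQmem : ∀ n, ∃ ν, Q n = qd α ν ∧ LegendreDen α ν)
    (hQall : ∀ ν, LegendreDen α ν → ∃ n, Q n = qd α ν)
    (μ : ℝ → ℝ)
    (hμ : ∀ n, ∀ t ∈ Set.Icc (Q n) (Q (n+1)),
      μ t = ((Q (n+1) - t)/(Q (n+1) - Q n)) * nidist (Q n * α)
          + ((t - Q n)/(Q (n+1) - Q n)) * nidist (Q (n+1) * α)) :
    1/4 ≤ Filter.limsup (fun t => t * μ t) Filter.atTop ∧
    Filter.limsup (fun t => t * μ t) Filter.atTop ≤ 1/2 := by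
  have hchord := legendreChord_of_legendreDen_enum hα hQmono hQmem hQall
  have hQtop := tendsto_atTop_of_legendreDen_enum hα hQmono hQall
  have hupper : ∀ᶠ t in atTop, t * μ t ≤ 1 / 2 := by
    filter_upwards [eventually_ge_atTop (Q 0)] with t ht
    obtain ⟨n, hn⟩ := exists_mem_Icc_of_tendsto_atTop hQmono.monotone hQtop ht
    rw [hμ n t hn]
    exact (hchord n).mul_linInterp_le_half t
  have hlower : ∃ᶠ t in atTop, 1 / 4 ≤ t * μ t := by
    have hmid : Tendsto (fun n => (Q n + Q (n + 1)) / 2) atTop atTop :=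
      tendsto_atTop_mono (fun n => by linarith [hQmono n.lt_succ_self]) hQtop
    refine hmid.frequently (Frequently.of_forall fun n => ?_)
    rw [hμ n _ ⟨by linarith [hQmono n.lt_succ_self], by linarith [hQmono n.lt_succ_self]⟩]
    exact (hchord n).quarter_le_mid_mul_linInterp
  exact ⟨le_limsup_of_frequently_le hlower (isBoundedUnder_of_eventually_le hupper),
    limsup_le_of_le (IsCoboundedUnder.of_frequently_ge hlower) hupper⟩
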